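/- arXiv:0811.4159 — 2 statements merged into one kernel-verified Lean document; each statement's English description precedes it below -/
import Mathlib

section
/- Let p be a prime, let λ be a power-of-p multiset, let 0 ≤ j < p − 1, and let μ ∈ T^j(λ) be any multiset obtained from λ by j successive gathering operations. Then μ is p-carry-minimal: α_p(μ) ≤ α_p(ν) for every multiset ν of positive integers with the same sum and the same cardinality as μ. -/
open MvPolynomial

/-- The `m`-coboundary map `δ_m` on polynomials in `k` variables `x_1, …, x_k`
(indexed by `Fin k`, with `j : Fin k` standing for the variable `x_{j+1}`),
landing in polynomials in the variables `x_0, …, x_k` (indexed by `Fin (k+1)`). -/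
noncomputable def delta (A : Type*) [CommRing A] (m k : ℕ)
    (f : MvPolynomial (Fin k) A) : MvPolynomial (Fin (k + 1)) A :=
  aeval (fun j : Fin k => (X j.succ : MvPolynomial (Fin (k + 1)) A)) f
    + ∑ i ∈ Finset.Icc 1 m, (-1 : MvPolynomial (Fin (k + 1)) A) ^ i *
        aeval (fun j : Fin k =>
          if (j : ℕ) + 1 < i then (X j.castSucc : MvPolynomial (Fin (k + 1)) A)
          else if (j : ℕ) + 1 = i then X j.castSucc + X j.succ
          else X j.succ) f
    + (-1 : MvPolynomial (Fin (k + 1)) A) ^ (m + 1) *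
        aeval (fun j : Fin k =>
          if (j : ℕ) + 1 ≤ m then (X j.castSucc : MvPolynomial (Fin (k + 1)) A)
          else X j.succ) f

/-- The monomial symmetric polynomial `τ λ` associated to a multi-index
`λ : Fin k → ℕ`: the sum of `x^μ` over the distinct rearrangements `μ` of `λ`. -/
noncomputable def tau (A : Type*) [CommRing A] {k : ℕ} (lam : Fin k → ℕ) :
    MvPolynomial (Fin k) A :=
  ∑ d ∈ (Finset.univ : Finset (Equiv.Perm (Fin k))).image
      (fun σ => Finsupp.equivFunOnFinite.symm (fun i => lam (σ i))),
    monomial d (1 : A)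

/-- The multiset of values of a multi-index `Fin k → ℕ`. -/
def multisetOf {k : ℕ} (lam : Fin k → ℕ) : Multiset ℕ :=
  Multiset.map lam Finset.univ.val

/-- The exponent multiset of an exponent vector `d : Fin k →₀ ℕ`. -/
def exMult {k : ℕ} (d : Fin k →₀ ℕ) : Multiset ℕ :=
  multisetOf (⇑d)

/-- `σ_p(n)`, the sum of the digits of `n` in base `p`. -/
def sigmaDigits (p n : ℕ) : ℕ := (Nat.digits p n).sum

/-- `α_p(λ)`, the number of carries when summing the entries of `λ` in base `p`;
equivalently the `p`-adic valuation of the multinomial coefficient of `λ`. -/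
def alphaCarry (p : ℕ) (s : Multiset ℕ) : ℕ :=
  padicValNat p (Nat.factorial s.sum / (s.map Nat.factorial).prod)

/-- The splitting distance `φ_p(λ) = (Σ_i σ_p(λ_i)) − |λ|`. -/
def phiSplit (p : ℕ) (s : Multiset ℕ) : ℕ :=
  (s.map (sigmaDigits p)).sum - Multiset.card s

/-- A multiset is power-of-`p` when all its entries are powers of `p`. -/
def IsPowOf (p : ℕ) (s : Multiset ℕ) : Prop := ∀ x ∈ s, ∃ a : ℕ, x = p ^ a

/-- `λ` is `p`-carry-minimal: `α_p(λ) ≤ α_p(μ)` for every multiset `μ` of positive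
integers with the same sum and the same number of entries as `λ`. -/
def IsCarryMin (p : ℕ) (s : Multiset ℕ) : Prop :=
  ∀ t : Multiset ℕ, (∀ x ∈ t, 0 < x) → t.sum = s.sum →
    Multiset.card t = Multiset.card s → alphaCarry p s ≤ alphaCarry p t

/-- A single gathering operation: replace two entries `a`, `b` by `a + b`. -/
def Gathers (s t : Multiset ℕ) : Prop :=
  ∃ a b u, s = a ::ₘ b ::ₘ u ∧ t = (a + b) ::ₘ u

/-- `gatherSet m λ = T^m(λ)`, the set of multisets obtained from `λ` by `m`
successive gathering operations. -/
def gatherSet : ℕ → Multiset ℕ → Set (Multiset ℕ)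
  | 0, s => {s}
  | m + 1, s => {t | ∃ u ∈ gatherSet m s, Gathers u t}

/-- One step of the annihilating-set construction: split an entry `x = a + b`
(with `a, b > 0` and no base-`p` carries in `a + b`), and add `b` onto another
entry `y`. -/
def AnnStep (p : ℕ) (μ ν : Multiset ℕ) : Prop :=
  ∃ (x y a b : ℕ) (u : Multiset ℕ), μ = x ::ₘ y ::ₘ u ∧ 0 < a ∧ 0 < b ∧ a + b = x ∧
    sigmaDigits p a + sigmaDigits p b = sigmaDigits p x ∧ ν = a ::ₘ (b + y) ::ₘ u

/-- `ann_p(λ)`: the smallest set of multisets containing `λ` closed under `AnnStep`. -/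
def annSet (p : ℕ) (lam : Multiset ℕ) : Set (Multiset ℕ) :=
  {μ | Relation.ReflTransGen (AnnStep p) lam μ}

/-- The `m`-coboundary map as a linear map. -/
noncomputable def deltaLM (A : Type*) [CommRing A] (m k : ℕ) :
    MvPolynomial (Fin k) A →ₗ[A] MvPolynomial (Fin (k + 1)) A :=
  (aeval (fun j : Fin k => (X j.succ : MvPolynomial (Fin (k + 1)) A))).toLinearMap
    + ∑ i ∈ Finset.Icc 1 m, ((-1 : A) ^ i) •
        (aeval (fun j : Fin k =>
          if (j : ℕ) + 1 < i then (X j.castSucc : MvPolynomial (Fin (k + 1)) A)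
          else if (j : ℕ) + 1 = i then X j.castSucc + X j.succ
          else X j.succ)).toLinearMap
    + ((-1 : A) ^ (m + 1)) •
        (aeval (fun j : Fin k =>
          if (j : ℕ) + 1 ≤ m then (X j.castSucc : MvPolynomial (Fin (k + 1)) A)
          else X j.succ)).toLinearMap
section Aux

variable {p : ℕ}

lemma sigma_le (n : ℕ) : sigmaDigits p n ≤ n := Nat.digit_sum_le p n

lemma legendre (hp : p.Prime) (n : ℕ) :
    (p - 1) * padicValNat p (Nat.factorial n) + sigmaDigits p n = n := by
  haveI : Fact p.Prime := ⟨hp⟩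
  have h := sub_one_mul_padicValNat_factorial (p := p) n
  have h2 := sigma_le (p := p) n
  unfold sigmaDigits at *
  omega

lemma kummer (hp : p.Prime) (a b : ℕ) :
    (p - 1) * padicValNat p ((a + b).choose a) + sigmaDigits p (a + b) =
      sigmaDigits p a + sigmaDigits p b := by
  haveI : Fact p.Prime := ⟨hp⟩
  have hfact : ((b + a).choose a * b.factorial * a.factorial) = (b + a).factorial :=
    Nat.add_choose_mul_factorial_mul_factorial b a
  have hC : (b + a).choose a ≠ 0 := (Nat.choose_pos (Nat.le_add_left a b)).ne'
  have hv : padicValNat p ((b + a).factorial) =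
      padicValNat p ((b + a).choose a) + padicValNat p b.factorial
        + padicValNat p a.factorial := by
    rw [← hfact, padicValNat.mul (Nat.mul_ne_zero hC b.factorial_pos.ne') a.factorial_pos.ne',
      padicValNat.mul hC b.factorial_pos.ne']
  have l1 := legendre hp (a + b)
  have l2 := legendre hp a
  have l3 := legendre hp b
  have hba : b + a = a + b := Nat.add_comm b a
  rw [hba] at hv hfact
  rw [hv, Nat.mul_add, Nat.mul_add] at l1
  omega

lemma sigma_subadd (hp : p.Prime) (a b : ℕ) :
    sigmaDigits p (a + b) ≤ sigmaDigits p a + sigmaDigits p b := by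
  have := kummer hp a b; omega

lemma prodFactDvd (s : Multiset ℕ) :
    (s.map Nat.factorial).prod ∣ Nat.factorial s.sum := by
  induction s using Multiset.induction with
  | empty => simp
  | cons a s ih =>
    rw [Multiset.map_cons, Multiset.prod_cons, Multiset.sum_cons]
    calc a.factorial * (s.map Nat.factorial).prod
        ∣ a.factorial * s.sum.factorial := Nat.mul_dvd_mul_left _ ih
      _ ∣ (a + s.sum).factorial := Nat.factorial_mul_factorial_dvd_factorial_add a s.sum

lemma alphaStep (hp : p.Prime) (a : ℕ) (s : Multiset ℕ) :
    alphaCarry p (a ::ₘ s) =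
      padicValNat p ((a + s.sum).choose a) + alphaCarry p s := by
  haveI : Fact p.Prime := ⟨hp⟩
  set n := s.sum with hn
  set P := (s.map Nat.factorial).prod with hP
  have hPdvd : P ∣ n.factorial := prodFactDvd s
  have hPpos : 0 < P := by
    rw [hP]
    exact Multiset.prod_pos (by simp; intro x _; exact x.factorial_pos)
  set q := n.factorial / P with hq
  have hqP : P * q = n.factorial := Nat.mul_div_cancel' hPdvd
  have hqpos : 0 < q := Nat.div_pos (Nat.le_of_dvd n.factorial_pos hPdvd) hPpos
  have hfact : (n + a).choose a * n.factorial * a.factorial = (n + a).factorial :=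
    Nat.add_choose_mul_factorial_mul_factorial n a
  have hsum : (a ::ₘ s).sum = a + n := by simp [hn]
  have hprod : ((a ::ₘ s).map Nat.factorial).prod = a.factorial * P := by
    simp [hP]
  have key : (a + n).factorial / (a.factorial * P) = (a + n).choose a * q := by
    have h1 : (a + n).factorial = (a + n).choose a * q * (a.factorial * P) := by
      rw [Nat.add_comm a n, ← hfact]
      have : (n + a).choose a * q * (a.factorial * P)
          = (n + a).choose a * (P * q) * a.factorial := by ring
      rw [this, hqP]
    rw [h1, Nat.mul_div_cancel _ (Nat.mul_pos a.factorial_pos hPpos)]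
  have hCpos : 0 < (a + n).choose a := Nat.choose_pos (Nat.le_add_right a n)
  unfold alphaCarry
  rw [hsum, hprod, key, padicValNat.mul hCpos.ne' hqpos.ne']

lemma alphaKey (hp : p.Prime) (s : Multiset ℕ) :
    (p - 1) * alphaCarry p s + sigmaDigits p s.sum = (s.map (sigmaDigits p)).sum := by
  induction s using Multiset.induction with
  | empty =>
    simp [alphaCarry, sigmaDigits]
  | cons a s ih =>
    rw [alphaStep hp a s, Multiset.map_cons, Multiset.sum_cons, Multiset.sum_cons,
      Nat.mul_add]
    have hk := kummer hp a s.sum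
    omega

lemma sigma_pos (hp : 1 < p) : ∀ x, 0 < x → 0 < sigmaDigits p x := by
  intro x
  induction x using Nat.strong_induction_on with
  | _ x ih =>
    intro hx
    have hd : Nat.digits p x = x % p :: Nat.digits p (x / p) :=
      Nat.digits_def' hp hx
    unfold sigmaDigits
    rw [hd, List.sum_cons]
    rcases Nat.eq_zero_or_pos (x % p) with h0 | h1
    · have hdvd : p ∣ x := Nat.dvd_of_mod_eq_zero h0
      have hxp : 0 < x / p := Nat.div_pos (Nat.le_of_dvd hx hdvd) (by omega)
      have := ih (x / p) (Nat.div_lt_self hx hp) hxp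
      unfold sigmaDigits at this
      omega
    · omega

lemma sigma_pow (hp : 1 < p) (a : ℕ) : sigmaDigits p (p ^ a) = 1 := by
  induction a with
  | zero =>
    unfold sigmaDigits
    rw [pow_zero, Nat.digits_def' hp Nat.one_pos]
    simp [Nat.mod_eq_of_lt hp, Nat.div_eq_of_lt hp]
  | succ n ih =>
    unfold sigmaDigits at *
    have hpos : 0 < p ^ (n + 1) := pow_pos (by omega) _
    rw [Nat.digits_def' hp hpos, List.sum_cons, pow_succ, Nat.mul_mod_left,
      Nat.mul_div_cancel _ (by omega : 0 < p)]
    omega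

lemma sigma_modeq (hp : p.Prime) (x : ℕ) : x ≡ sigmaDigits p x [MOD p - 1] := by
  rcases Nat.lt_or_ge 2 p with h | h
  · obtain ⟨q, rfl⟩ := Nat.exists_eq_add_of_lt h
    refine Nat.modEq_digits_sum (2 + q + 1 - 1) (2 + q + 1) ?_ x
    rw [show 2 + q + 1 - 1 = q + 2 by omega, show 2 + q + 1 = (q + 2) + 1 by omega,
      Nat.add_mod_left, Nat.mod_eq_of_lt (by omega)]
  · have : p = 2 := le_antisymm h hp.two_le
    subst this
    simp [Nat.ModEq, Nat.mod_one]

lemma sum_sigma_modeq (hp : p.Prime) (s : Multiset ℕ) :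
    s.sum ≡ (s.map (sigmaDigits p)).sum [MOD p - 1] := by
  induction s using Multiset.induction with
  | empty => rfl
  | cons a s ih =>
    rw [Multiset.sum_cons, Multiset.map_cons, Multiset.sum_cons]
    exact (sigma_modeq hp a).add ih

lemma gather_props (hp : p.Prime) (lam : Multiset ℕ) (hpos : ∀ x ∈ lam, 0 < x) :
    ∀ j, ∀ μ ∈ gatherSet j lam,
      Multiset.card μ + j = Multiset.card lam ∧ μ.sum = lam.sum ∧
        (∀ x ∈ μ, 0 < x) ∧ (μ.map (sigmaDigits p)).sum ≤ (lam.map (sigmaDigits p)).sum := by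
  intro j
  induction j with
  | zero =>
    intro μ hμ
    simp only [gatherSet, Set.mem_singleton_iff] at hμ
    subst hμ
    exact ⟨rfl, rfl, hpos, le_rfl⟩
  | succ m ih =>
    intro μ hμ
    obtain ⟨u, hu, a, b, w, huw, hμw⟩ := hμ
    obtain ⟨hcard, hsum, hpos', hle⟩ := ih u hu
    subst huw hμw
    simp only [Multiset.card_cons, Multiset.sum_cons, Multiset.map_cons,
      Multiset.sum_cons] at *
    refine ⟨by omega, by omega, ?_, ?_⟩
    · intro x hx
      rcases Multiset.mem_cons.mp hx with h | h
      · subst h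
        have := hpos' a (by simp)
        omega
      · exact hpos' x (Multiset.mem_cons_of_mem (Multiset.mem_cons_of_mem h))
    · have := sigma_subadd hp a b
      omega

end Aux

/-- Any multiset obtained from a power-of-`p` multiset by fewer
than `p − 1` gathering operations is `p`-carry-minimal. -/
theorem statement6 (p : ℕ) (hp : p.Prime) (lam : Multiset ℕ) (hpow : IsPowOf p lam)
    (j : ℕ) (hj : j < p - 1) (μ : Multiset ℕ) (hμ : μ ∈ gatherSet j lam) :
    IsCarryMin p μ := by
  have hp1 : 1 < p := hp.one_lt
  have hlampos : ∀ x ∈ lam, 0 < x := by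
    intro x hx
    obtain ⟨a, rfl⟩ := hpow x hx
    exact pow_pos (by omega) a
  have hlamsig : (lam.map (sigmaDigits p)).sum = Multiset.card lam := by
    have : lam.map (sigmaDigits p) = lam.map (fun _ => 1) := by
      apply Multiset.map_congr rfl
      intro x hx
      obtain ⟨a, rfl⟩ := hpow x hx
      exact sigma_pow hp1 a
    rw [this, Multiset.map_const', Multiset.sum_replicate, smul_eq_mul, Nat.mul_one]
  obtain ⟨hcard, hsum, hμpos, hμle⟩ := gather_props hp lam hlampos j μ hμ
  set K := Multiset.card lam with hK
  set n := lam.sum with hn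
  -- card-based lower bound for sum of sigmas of a positive multiset
  have lower : ∀ t : Multiset ℕ, (∀ x ∈ t, 0 < x) →
      Multiset.card t ≤ (t.map (sigmaDigits p)).sum := by
    intro t ht
    induction t using Multiset.induction with
    | empty => simp
    | cons a s ih =>
      rw [Multiset.map_cons, Multiset.sum_cons, Multiset.card_cons]
      have h1 := sigma_pos hp1 a (ht a (by simp))
      have h2 := ih (fun x hx => ht x (Multiset.mem_cons_of_mem hx))
      omega
  have keybound : ∀ t : Multiset ℕ, (∀ x ∈ t, 0 < x) → t.sum = n →
      Multiset.card t + j = K → K ≤ (t.map (sigmaDigits p)).sum := by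
    intro t ht htsum htcard
    set S := (t.map (sigmaDigits p)).sum with hS
    have h1 : Multiset.card t ≤ S := lower t ht
    by_contra hlt
    push_neg at hlt
    have hmod : S ≡ K [MOD p - 1] := by
      have m1 : n ≡ S [MOD p - 1] := htsum ▸ sum_sigma_modeq hp t
      have m2 : n ≡ K [MOD p - 1] := hlamsig ▸ sum_sigma_modeq hp lam
      exact m1.symm.trans m2
    have hdvd : (p - 1) ∣ K - S := (Nat.modEq_iff_dvd' (le_of_lt hlt)).mp hmod
    have hKS : 0 < K - S := by omega
    have := Nat.le_of_dvd hKS hdvd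
    omega
  have hμS : (μ.map (sigmaDigits p)).sum = K := by
    have h1 := keybound μ hμpos hsum hcard
    omega
  intro t ht htsum htcard
  have htsum' : t.sum = n := by rw [htsum, hsum]
  have htcard' : Multiset.card t + j = K := by rw [htcard]; exact hcard
  have htS := keybound t ht htsum' htcard'
  have e1 := alphaKey hp μ
  have e2 := alphaKey hp t
  rw [hsum] at e1
  rw [htsum'] at e2
  rw [hμS] at e1
  have hle : (p - 1) * alphaCarry p μ ≤ (p - 1) * alphaCarry p t := by omega
  exact Nat.le_of_mul_le_mul_left hle (by omega)
end

section
/- Let p be a prime and let λ and μ be two power-of-p multisets of equal cardinality and equal sum. Then α_p(λ) = α_p(μ). -/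
open MvPolynomial

section statement7aux
variable {p : ℕ}

private lemma prod_fact_dvd' (s : Multiset ℕ) :
    (s.map Nat.factorial).prod ∣ (s.sum).factorial := by
  induction s using Multiset.induction with
  | empty => simp
  | cons a s ih =>
    simp only [Multiset.map_cons, Multiset.prod_cons, Multiset.sum_cons]
    exact (mul_dvd_mul_left _ ih).trans (Nat.factorial_mul_factorial_dvd_factorial_add _ _)

private lemma prod_fact_ne_zero' (s : Multiset ℕ) : (s.map Nat.factorial).prod ≠ 0 := by
  induction s using Multiset.induction with
  | empty => simp
  | cons a s ih => simp only [Multiset.map_cons, Multiset.prod_cons]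
                   exact mul_ne_zero (Nat.factorial_ne_zero _) ih

private lemma digits_sum_pow' (hp : 1 < p) (a : ℕ) : (Nat.digits p (p ^ a)).sum = 1 := by
  have h := Nat.digits_base_pow_mul (b := p) (k := a) (m := 1) hp one_pos
  rw [mul_one] at h
  rw [h]
  simp [Nat.digits_def' hp, Nat.mod_eq_of_lt hp, Nat.div_eq_of_lt hp]

private lemma key_powsum (hp : p.Prime) (s : Multiset ℕ)
    (hs : ∀ x ∈ s, ∃ a : ℕ, x = p ^ a) :
    (p - 1) * padicValNat p ((s.map Nat.factorial).prod) + Multiset.card s = s.sum := by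
  haveI : Fact p.Prime := ⟨hp⟩
  induction s using Multiset.induction with
  | empty => simp
  | cons x s ih =>
    obtain ⟨a, rfl⟩ := hs x (Multiset.mem_cons_self _ _)
    have ih' := ih (fun y hy => hs y (Multiset.mem_cons_of_mem hy))
    simp only [Multiset.map_cons, Multiset.prod_cons, Multiset.sum_cons, Multiset.card_cons]
    rw [padicValNat.mul (Nat.factorial_ne_zero _) (prod_fact_ne_zero' s), mul_add]
    have h1 : (p - 1) * padicValNat p ((p ^ a).factorial) = p ^ a - 1 := by
      rw [sub_one_mul_padicValNat_factorial, digits_sum_pow' hp.one_lt]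
    have hpa : 1 ≤ p ^ a := Nat.one_le_pow _ _ hp.pos
    rw [h1]
    generalize hB : (p - 1) * padicValNat p ((Multiset.map Nat.factorial s).prod) = B at ih' ⊢
    omega

private lemma key_alpha (hp : p.Prime) (s : Multiset ℕ)
    (hs : ∀ x ∈ s, ∃ a : ℕ, x = p ^ a) :
    (p - 1) * alphaCarry p s + s.sum
      = (p - 1) * padicValNat p ((s.sum).factorial) + Multiset.card s := by
  haveI : Fact p.Prime := ⟨hp⟩
  have hdvd := prod_fact_dvd' s
  have hne : (s.sum).factorial ≠ 0 := Nat.factorial_ne_zero _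
  have hle : padicValNat p ((s.map Nat.factorial).prod)
      ≤ padicValNat p ((s.sum).factorial) := by
    rw [← padicValNat_dvd_iff_le hne]
    exact (pow_padicValNat_dvd).trans hdvd
  rw [alphaCarry, padicValNat.div_of_dvd hdvd]
  have hkey := key_powsum hp s hs
  generalize hA : padicValNat p ((s.map Nat.factorial).prod) = A at *
  generalize hB : padicValNat p ((s.sum).factorial) = B at *
  have h2 : (p - 1) * (B - A) + (p - 1) * A = (p - 1) * B := by
    rw [← Nat.mul_add, Nat.sub_add_cancel hle]
  omega

end statement7aux

/-- Two power-of-`p` multisets of equal cardinality and equal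
sum have the same carry count. -/
theorem statement7 (p : ℕ) (hp : p.Prime) (lam μ : Multiset ℕ)
    (hlam : IsPowOf p lam) (hμ : IsPowOf p μ)
    (hcard : Multiset.card lam = Multiset.card μ) (hsum : lam.sum = μ.sum) :
    alphaCarry p lam = alphaCarry p μ := by
  have h1 := key_alpha hp lam hlam
  have h2 := key_alpha hp μ hμ
  rw [hsum, hcard] at h1
  have h3 : (p - 1) * alphaCarry p lam = (p - 1) * alphaCarry p μ := by omega
  have hp1 : 0 < p - 1 := by have := hp.two_le; omega
  exact Nat.eq_of_mul_eq_mul_left hp1 h3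
end
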